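/- arXiv:1409.8396 — 2 statements merged into one kernel-verified Lean document; each statement's English description precedes it below -/
import Mathlib

section
/- A binary algebra is a medial quandle if and only if it is isomorphic to the sum of an indecomposable affine mesh; moreover, for a medial quandle Q, the mesh can be chosen so that its fibres are exactly the orbits of Q (as subquandles). -/
/-- The set of left translations of a binary algebra `(Q, op)`, viewed as permutations:
permutations `f` such that `f x = op a x` for some `a`. -/
def translations {Q : Type*} (op : Q → Q → Q) : Set (Equiv.Perm Q) :=
  { f | ∃ a : Q, ∀ x : Q, f x = op a x }

/-- The (left) multiplication group `LMlt(Q)`: the subgroup of the symmetric group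
generated by the left translations. -/
def LMlt {Q : Type*} (op : Q → Q → Q) : Subgroup (Equiv.Perm Q) :=
  Subgroup.closure (translations op)

/-- The displacement group `Dis(Q)`: the subgroup generated by all `L_a * L_b⁻¹`. -/
def Dis {Q : Type*} (op : Q → Q → Q) : Subgroup (Equiv.Perm Q) :=
  Subgroup.closure { f | ∃ g ∈ translations op, ∃ h ∈ translations op, f = g * h⁻¹ }

/-- `(Q, op)` is a quandle: idempotent, left distributive, left quasigroup. -/
def IsQuandle {Q : Type*} (op : Q → Q → Q) : Prop :=
  (∀ x, op x x = x) ∧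
  (∀ x y z, op x (op y z) = op (op x y) (op x z)) ∧
  (∀ x y, ∃! u, op x u = y)

/-- `(Q, op)` is medial. -/
def IsMedial {Q : Type*} (op : Q → Q → Q) : Prop :=
  ∀ x y u v, op (op x y) (op u v) = op (op x u) (op y v)

/-- The orbit of `e` under the multiplication group. -/
def qOrbit {Q : Type*} (op : Q → Q → Q) (e : Q) : Set Q :=
  { y | ∃ f ∈ LMlt op, f e = y }

/-- The orbit of `e` under the displacement group. -/
def disOrbit {Q : Type*} (op : Q → Q → Q) (e : Q) : Set Q :=
  { y | ∃ f ∈ Dis op, f e = y }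

/-- An affine mesh over an index set `I`: abelian groups `A i`, homomorphisms
`φ i j : A i →+ A j`, and constants `c i j ∈ A j`, satisfying (M1)–(M4). -/
structure AffineMesh (I : Type*) (A : I → Type*) [∀ i, AddCommGroup (A i)] where
  φ : ∀ i j : I, A i →+ A j
  c : ∀ i j : I, A j
  m1 : ∀ i : I, Function.Bijective fun x : A i => x - φ i i x
  m2 : ∀ i : I, c i i = 0
  m3 : ∀ i j j' k : I, (φ j k).comp (φ i j) = (φ j' k).comp (φ i j')
  m4 : ∀ i j k : I, φ j k (c i j) = φ k k (c i k - c j k)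

/-- The sum of an affine mesh: the binary operation on the disjoint union of the fibres,
`a * b = c i j + φ i j a + (1 - φ j j) b` for `a ∈ A i`, `b ∈ A j`. -/
def AffineMesh.sum {I : Type*} {A : I → Type*} [∀ i, AddCommGroup (A i)]
    (M : AffineMesh I A) (x y : Σ i, A i) : Σ i, A i :=
  ⟨y.1, M.c x.1 y.1 + M.φ x.1 y.1 x.2 + (y.2 - M.φ y.1 y.1 y.2)⟩

/-- An affine mesh is indecomposable if every fibre `A j` is generated by the
sets `c i j + Im (φ i j)`, `i ∈ I`. -/
def AffineMesh.Indecomposable {I : Type*} {A : I → Type*} [∀ i, AddCommGroup (A i)]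
    (M : AffineMesh I A) : Prop :=
  ∀ j : I, AddSubgroup.closure (⋃ i : I, Set.range fun a : A i => M.c i j + M.φ i j a) = ⊤

universe u

/-!
In a medial quandle the displacement group `Dis`, generated by the `δ(a, b) = L_a L_b⁻¹`, is
abelian, because mediality gives `L_y L_x⁻¹ L_z = L_z L_x⁻¹ L_y`. Its orbits are those of
`LMlt`, since `L_a x = δ(a, x) x`. A base point `e_ω = ω.out` in each orbit `ω` identifies `ω`
with the abelian group `Dis ⧸ Stab(e_ω)` via `g ↦ g e_ω`. The mesh is `c_{ij} = δ(e_i, e_j)` and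
`φ_{ij}(g) = δ(g e_i, e_i)`: as `Dis` is abelian, `δ(g a, g b) = δ(a, b)`, so `δ(g a, a)` does not
depend on `a` and is multiplicative in `g`. The quandle operation becomes the mesh sum because
`L_x = δ(x, e_j) L_{e_j}`, and the mesh is indecomposable because the `δ(a, e_j)` generate `Dis`.
Conversely, the sum of any mesh is a medial quandle by a direct computation from (M1)–(M4).
-/

open MulAction
open scoped IsMulCommutative

theorem Dis_le_LMlt {Q : Type*} {op : Q → Q → Q} : Dis op ≤ LMlt op :=
  Subgroup.closure_le _ |>.2 fun _ ⟨_, hg, _, hh, e⟩ =>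
    e ▸ mul_mem (Subgroup.subset_closure hg) (inv_mem (Subgroup.subset_closure hh))

theorem Dis_smul_def {Q : Type*} {op : Q → Q → Q} (g : Dis op) (x : Q) :
    g • x = (g : Equiv.Perm Q) x := rfl

variable {Q : Type*} (op : Q → Q → Q) in
abbrev OrbitGroup (ω : orbitRel.Quotient (Dis op) Q) :=
  Additive (Dis op ⧸ stabilizer (Dis op) ω.out)

theorem OrbitGroup.induction_on {Q : Type*} {op : Q → Q → Q} {ω : orbitRel.Quotient (Dis op) Q}
    {p : OrbitGroup op ω → Prop} (x : OrbitGroup op ω)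
    (h : ∀ g : Dis op, p (Additive.ofMul (g : Dis op ⧸ stabilizer (Dis op) ω.out))) : p x :=
  QuotientGroup.induction_on (C := fun q => p (Additive.ofMul q)) x.toMul h

variable {Q : Type*} (op : Q → Q → Q) in
noncomputable def orbitGroupEquiv : Q ≃ Σ ω, OrbitGroup op ω :=
  (selfEquivSigmaOrbitsQuotientStabilizer (Dis op) Q).trans
    (Equiv.sigmaCongrRight fun _ => Additive.ofMul)

section
variable {Q : Type*} {op : Q → Q → Q}

theorem orbitGroupEquiv_symm_apply (ω : orbitRel.Quotient (Dis op) Q) (g : Dis op) :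
    (orbitGroupEquiv op).symm ⟨ω, Additive.ofMul (g : Dis op ⧸ stabilizer (Dis op) ω.out)⟩
      = g • ω.out := rfl

theorem orbitGroupEquiv_fst (x : Q) : (orbitGroupEquiv op x).1 = Quotient.mk _ x := rfl

end

namespace IsQuandle

variable {Q : Type*} {op : Q → Q → Q} (hq : IsQuandle op)

noncomputable def leftMul (a : Q) : Equiv.Perm Q :=
  Equiv.ofBijective (op a) (Function.bijective_iff_existsUnique _ |>.2 (hq.2.2 a))

@[simp]
theorem leftMul_apply (a x : Q) : hq.leftMul a x = op a x := rfl

theorem leftMul_self_apply (a : Q) : hq.leftMul a a = a := hq.1 a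

theorem leftMul_inv_self_apply (a : Q) : (hq.leftMul a)⁻¹ a = a := by
  rw [Equiv.Perm.inv_eq_iff_eq, leftMul_self_apply]

theorem mem_translations_iff {f : Equiv.Perm Q} :
    f ∈ translations op ↔ ∃ a, hq.leftMul a = f :=
  exists_congr fun a => by simp [Equiv.ext_iff, eq_comm]

theorem leftMul_mem_LMlt (a : Q) : hq.leftMul a ∈ LMlt op :=
  Subgroup.subset_closure ((hq.mem_translations_iff).2 ⟨a, rfl⟩)

theorem leftMul_mul_inv_mem_Dis (a b : Q) : hq.leftMul a * (hq.leftMul b)⁻¹ ∈ Dis op :=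
  Subgroup.subset_closure
    ⟨_, hq.mem_translations_iff.2 ⟨a, rfl⟩, _, hq.mem_translations_iff.2 ⟨b, rfl⟩, rfl⟩

theorem Dis_induction {p : (f : Equiv.Perm Q) → f ∈ Dis op → Prop}
    (disp : ∀ a b, p _ (hq.leftMul_mul_inv_mem_Dis a b))
    (one : p 1 (one_mem _)) (mul : ∀ f g hf hg, p f hf → p g hg → p (f * g) (mul_mem hf hg))
    (inv : ∀ f hf, p f hf → p f⁻¹ (inv_mem hf)) {f : Equiv.Perm Q} (hf : f ∈ Dis op) :
    p f hf := by
  induction hf using Subgroup.closure_induction with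
  | mem f hf =>
    obtain ⟨_, hg, _, hh, rfl⟩ := hf
    obtain ⟨a, rfl⟩ := hq.mem_translations_iff.1 hg
    obtain ⟨b, rfl⟩ := hq.mem_translations_iff.1 hh
    exact disp a b
  | one => exact one
  | mul f g hf hg pf pg => exact mul f g hf hg pf pg
  | inv f hf pf => exact inv f hf pf

theorem leftMul_apply_eq_conj {f : Equiv.Perm Q} (hf : f ∈ LMlt op) (a : Q) :
    hq.leftMul (f a) = f * hq.leftMul a * f⁻¹ := by
  induction hf using Subgroup.closure_induction generalizing a with
  | mem f hf =>
    obtain ⟨b, rfl⟩ := hq.mem_translations_iff.1 hf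
    ext x
    show op (op b a) x = op b (op a ((hq.leftMul b)⁻¹ x))
    rw [hq.2.1]
    exact congrArg _ ((hq.leftMul b).apply_symm_apply x).symm
  | one => simp
  | mul f g _ _ ihf ihg => rw [Equiv.Perm.mul_apply, ihf, ihg]; group
  | inv f _ ihf =>
    have h := ihf (f⁻¹ a)
    rw [show f (f⁻¹ a) = a from f.apply_symm_apply a] at h
    rw [h]
    group

noncomputable def disp (a b : Q) : Dis op :=
  ⟨hq.leftMul a * (hq.leftMul b)⁻¹, hq.leftMul_mul_inv_mem_Dis a b⟩

@[simp]
theorem coe_disp (a b : Q) :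
    (hq.disp a b : Equiv.Perm Q) = hq.leftMul a * (hq.leftMul b)⁻¹ := rfl

theorem disp_mul_disp (a b c : Q) : hq.disp a b * hq.disp b c = hq.disp a c :=
  Subtype.ext (by simp only [Subgroup.coe_mul, coe_disp]; group)

theorem disp_self (a : Q) : hq.disp a a = 1 :=
  Subtype.ext (by simp)

theorem disp_smul_op (x e y : Q) : hq.disp x e • op e y = op x y :=
  congrArg (op x) ((hq.leftMul e).symm_apply_apply y)

section

include hq

theorem conj_mem_Dis {f d : Equiv.Perm Q} (hf : f ∈ LMlt op) (hd : d ∈ Dis op) :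
    f * d * f⁻¹ ∈ Dis op := by
  induction hd using hq.Dis_induction with
  | disp a b =>
    have h : f * (hq.leftMul a * (hq.leftMul b)⁻¹) * f⁻¹
        = hq.leftMul (f a) * (hq.leftMul (f b))⁻¹ := by
      rw [hq.leftMul_apply_eq_conj hf, hq.leftMul_apply_eq_conj hf]
      group
    exact h ▸ hq.leftMul_mul_inv_mem_Dis _ _
  | one => simp
  | mul d e _ _ hd he => simpa [mul_assoc] using mul_mem hd he
  | inv d _ hd => simpa [mul_assoc] using inv_mem hd

theorem exists_mem_Dis_apply_eq {f : Equiv.Perm Q} (hf : f ∈ LMlt op) (x : Q) :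
    ∃ d ∈ Dis op, d x = f x := by
  induction hf using Subgroup.closure_induction generalizing x with
  | mem f hf =>
    obtain ⟨a, rfl⟩ := hq.mem_translations_iff.1 hf
    exact ⟨_, hq.leftMul_mul_inv_mem_Dis a x, congrArg _ (hq.leftMul_inv_self_apply x)⟩
  | one => exact ⟨1, one_mem _, rfl⟩
  | mul f g _ _ ihf ihg =>
    obtain ⟨d, hd, hdx⟩ := ihg x
    obtain ⟨e, he, hex⟩ := ihf (g x)
    exact ⟨e * d, mul_mem he hd, by simp [hdx, hex]⟩
  | inv f _ ihf =>
    obtain ⟨d, hd, hdx⟩ := ihf (f⁻¹ x)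
    refine ⟨d⁻¹, inv_mem hd, ?_⟩
    rw [Equiv.Perm.inv_eq_iff_eq, hdx]
    exact (f.apply_symm_apply x).symm

theorem exists_mem_LMlt_iff_exists_mem_Dis (x y : Q) :
    (∃ f ∈ LMlt op, f x = y) ↔ ∃ d ∈ Dis op, d x = y :=
  ⟨fun ⟨_, hf, hfx⟩ => hfx ▸ hq.exists_mem_Dis_apply_eq hf x,
    fun ⟨d, hd, hdx⟩ => ⟨d, Dis_le_LMlt hd, hdx⟩⟩

theorem leftMul_mul_inv_mul_comm (hm : IsMedial op) (x y z : Q) :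
    hq.leftMul y * (hq.leftMul x)⁻¹ * hq.leftMul z
      = hq.leftMul z * (hq.leftMul x)⁻¹ * hq.leftMul y := by
  have h : hq.leftMul (op x y) * hq.leftMul z = hq.leftMul (op x z) * hq.leftMul y :=
    Equiv.ext (hm x y z)
  rw [← hq.leftMul_apply, ← hq.leftMul_apply,
    hq.leftMul_apply_eq_conj (hq.leftMul_mem_LMlt x),
    hq.leftMul_apply_eq_conj (hq.leftMul_mem_LMlt x)] at h
  simpa [mul_assoc] using h

theorem isMulCommutative_Dis (hm : IsMedial op) : IsMulCommutative (Dis op) := by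
  refine Subgroup.isMulCommutative_closure ?_
  rintro _ ⟨_, ha, _, hb, rfl⟩ _ ⟨_, hc, _, hd, rfl⟩
  obtain ⟨a, rfl⟩ := hq.mem_translations_iff.1 ha
  obtain ⟨b, rfl⟩ := hq.mem_translations_iff.1 hb
  obtain ⟨c, rfl⟩ := hq.mem_translations_iff.1 hc
  obtain ⟨d, rfl⟩ := hq.mem_translations_iff.1 hd
  set L := hq.leftMul
  have k := hq.leftMul_mul_inv_mul_comm hm
  calc L a * (L b)⁻¹ * (L c * (L d)⁻¹) = L a * (L b)⁻¹ * L c * (L d)⁻¹ := by group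
    _ = L c * (L b)⁻¹ * L a * (L d)⁻¹ := by rw [k b a c]
    _ = L c * ((L b)⁻¹ * (L a * (L d)⁻¹ * L b) * (L b)⁻¹) := by group
    _ = L c * ((L b)⁻¹ * (L b * (L d)⁻¹ * L a) * (L b)⁻¹) := by rw [k d a b]
    _ = L c * (L d)⁻¹ * (L a * (L b)⁻¹) := by group

theorem orbitGroupEquiv_fst_eq_iff (x y : Q) :
    (orbitGroupEquiv op x).1 = (orbitGroupEquiv op y).1 ↔ ∃ f ∈ LMlt op, f x = y := by
  rw [hq.exists_mem_LMlt_iff_exists_mem_Dis, orbitGroupEquiv_fst, orbitGroupEquiv_fst, eq_comm,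
    Quotient.eq, orbitRel_apply, mem_orbit_iff, Subtype.exists]
  exact ⟨fun ⟨d, hd, h⟩ => ⟨d, hd, h⟩, fun ⟨d, hd, h⟩ => ⟨d, hd, h⟩⟩

end

section

variable [IsMulCommutative (Dis op)]

theorem disp_smul_smul (g : Dis op) (a b : Q) : hq.disp (g • a) (g • b) = hq.disp a b := by
  have h : hq.disp (g • a) (g • b) = g * hq.disp a b * g⁻¹ := by
    apply Subtype.ext
    simp only [coe_disp, Subgroup.coe_mul, Subgroup.coe_inv, Dis_smul_def,
      hq.leftMul_apply_eq_conj (Dis_le_LMlt g.2)]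
    group
  rw [h, mul_inv_cancel_comm]

theorem disp_smul_self (g : Dis op) (a b : Q) : hq.disp (g • a) a = hq.disp (g • b) b := by
  calc hq.disp (g • a) a = hq.disp (g • a) (g • b) * hq.disp (g • b) b * hq.disp b a := by
        rw [disp_mul_disp, disp_mul_disp]
    _ = hq.disp (g • b) b * (hq.disp a b * hq.disp b a) := by
        rw [disp_smul_smul, mul_comm (hq.disp a b), mul_assoc]
    _ = hq.disp (g • b) b := by rw [disp_mul_disp, disp_self, mul_one]

noncomputable def dispHom (a : Q) : Dis op →* Dis op where
  toFun g := hq.disp (g • a) a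
  map_one' := by rw [one_smul, disp_self]
  map_mul' g h := by
    rw [mul_smul, ← disp_mul_disp _ _ (h • a), hq.disp_smul_self g (h • a) a]

@[simp]
theorem dispHom_apply (a : Q) (g : Dis op) : hq.dispHom a g = hq.disp (g • a) a := rfl

theorem dispHom_eq (a b : Q) : hq.dispHom a = hq.dispHom b :=
  MonoidHom.ext fun g => hq.disp_smul_self g a b

theorem stabilizer_le_ker_dispHom (a : Q) : stabilizer (Dis op) a ≤ (hq.dispHom a).ker :=
  fun g hg => by rw [MonoidHom.mem_ker, dispHom_apply, mem_stabilizer_iff.1 hg, disp_self]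

theorem div_dispHom_smul (g : Dis op) (e : Q) : (g / hq.dispHom e g) • e = op e (g • e) := by
  let k : Dis op := ⟨hq.leftMul e * (g : Equiv.Perm Q)⁻¹ * (hq.leftMul e)⁻¹,
    hq.conj_mem_Dis (hq.leftMul_mem_LMlt e) (inv_mem g.2)⟩
  have hk : hq.dispHom e g = g * k := by
    apply Subtype.ext
    simp only [dispHom_apply, coe_disp, Subgroup.coe_mul, Dis_smul_def, k,
      hq.leftMul_apply_eq_conj (Dis_le_LMlt g.2)]
    group
  rw [hk, div_mul_cancel_left]
  show (hq.leftMul e * (g : Equiv.Perm Q)⁻¹ * (hq.leftMul e)⁻¹)⁻¹ e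
    = op e ((g : Equiv.Perm Q) e)
  simp only [mul_inv_rev, inv_inv, Equiv.Perm.mul_apply, hq.leftMul_inv_self_apply, leftMul_apply]

noncomputable def meshHom (i j : orbitRel.Quotient (Dis op) Q) :
    OrbitGroup op i →+ OrbitGroup op j :=
  MonoidHom.toAdditive <| QuotientGroup.lift _ ((QuotientGroup.mk' _).comp (hq.dispHom i.out))
    fun g hg => by
      rw [MonoidHom.mem_ker, MonoidHom.comp_apply,
        MonoidHom.mem_ker.1 (hq.stabilizer_le_ker_dispHom _ hg), map_one]

@[simp]
theorem meshHom_ofMul (i j : orbitRel.Quotient (Dis op) Q) (g : Dis op) :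
    hq.meshHom i j (Additive.ofMul (g : Dis op ⧸ stabilizer (Dis op) i.out))
      = Additive.ofMul (hq.dispHom i.out g : Dis op ⧸ stabilizer (Dis op) j.out) := rfl

noncomputable def meshConst (i j : orbitRel.Quotient (Dis op) Q) : OrbitGroup op j :=
  Additive.ofMul (hq.disp i.out j.out : Dis op ⧸ stabilizer (Dis op) j.out)

theorem meshConst_sub_meshConst (i j k : orbitRel.Quotient (Dis op) Q) :
    hq.meshConst i k - hq.meshConst j k
      = Additive.ofMul (hq.disp i.out j.out : Dis op ⧸ stabilizer (Dis op) k.out) := by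
  rw [meshConst, meshConst, ← ofMul_div, ← QuotientGroup.mk_div, ← hq.disp_mul_disp _ j.out,
    mul_div_cancel_right]

theorem meshConst_add_meshHom (i j : orbitRel.Quotient (Dis op) Q) (g : Dis op) :
    hq.meshConst i j + hq.meshHom i j (Additive.ofMul (g : Dis op ⧸ stabilizer (Dis op) i.out))
      = Additive.ofMul (hq.disp (g • i.out) j.out : Dis op ⧸ stabilizer (Dis op) j.out) := by
  rw [meshConst, meshHom_ofMul, ← ofMul_mul, ← QuotientGroup.mk_mul, dispHom_apply, mul_comm,
    disp_mul_disp]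

theorem ofQuotientStabilizer_sub_meshHom (i : orbitRel.Quotient (Dis op) Q) (x : OrbitGroup op i) :
    ofQuotientStabilizer (Dis op) i.out (x - hq.meshHom i i x).toMul
      = op i.out (ofQuotientStabilizer (Dis op) i.out x.toMul) := by
  induction x using OrbitGroup.induction_on with | h g => ?_
  rw [meshHom_ofMul, ← ofMul_div, toMul_ofMul, toMul_ofMul, ← QuotientGroup.mk_div,
    ofQuotientStabilizer_mk, ofQuotientStabilizer_mk, div_dispHom_smul]

theorem sub_meshHom_self_bijective (i : orbitRel.Quotient (Dis op) Q) :
    Function.Bijective fun x : OrbitGroup op i => x - hq.meshHom i i x := by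
  have key := hq.ofQuotientStabilizer_sub_meshHom i
  refine ⟨fun x y hxy => ?_, fun y => ?_⟩
  · have h := congrArg (fun z : OrbitGroup op i => ofQuotientStabilizer (Dis op) i.out z.toMul) hxy
    simp only [key] at h
    exact Additive.toMul.injective
      (injective_ofQuotientStabilizer _ _ ((hq.leftMul i.out).injective h))
  · induction y using OrbitGroup.induction_on with | h h => ?_
    let g : Dis op := ⟨(hq.leftMul i.out)⁻¹ * h * hq.leftMul i.out, by
      simpa using hq.conj_mem_Dis (inv_mem (hq.leftMul_mem_LMlt i.out)) h.2⟩
    refine ⟨Additive.ofMul (g : Dis op ⧸ _),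
      Additive.toMul.injective (injective_ofQuotientStabilizer _ i.out ?_)⟩
    rw [key, toMul_ofMul, toMul_ofMul, ofQuotientStabilizer_mk, ofQuotientStabilizer_mk]
    show hq.leftMul i.out (((hq.leftMul i.out)⁻¹ * h * hq.leftMul i.out) i.out) = h • i.out
    rw [Equiv.Perm.mul_apply, hq.leftMul_self_apply]
    exact (hq.leftMul i.out).apply_symm_apply _

noncomputable def mesh : AffineMesh (orbitRel.Quotient (Dis op) Q) (OrbitGroup op) where
  φ := hq.meshHom
  c := hq.meshConst
  m1 := hq.sub_meshHom_self_bijective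
  m2 i := by rw [meshConst, disp_self]; rfl
  m3 i j j' k := AddMonoidHom.ext fun x => by
    induction x using OrbitGroup.induction_on with
    | h g => simp only [AddMonoidHom.comp_apply, meshHom_ofMul, hq.dispHom_eq j.out j'.out]
  m4 i j k := by
    rw [meshConst_sub_meshConst, meshConst, meshHom_ofMul, meshHom_ofMul, hq.dispHom_eq j.out k.out]

theorem mesh_indecomposable : hq.mesh.Indecomposable := by
  intro j
  set S := ⋃ i, Set.range fun a : OrbitGroup op i => hq.mesh.c i j + hq.mesh.φ i j a
  have gen_mem : ∀ a : Q,
      Additive.ofMul (hq.disp a j.out : Dis op ⧸ stabilizer (Dis op) j.out) ∈ S := by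
    intro a
    obtain ⟨g, hg⟩ :
        ∃ g : Dis op, g • (Quotient.mk _ a : orbitRel.Quotient (Dis op) Q).out = a := by
      have h := Quotient.mk_out (s := orbitRel (Dis op) Q) a
      rw [orbitRel_apply, mem_orbit_symm] at h
      exact h
    exact Set.mem_iUnion.2 ⟨_, _, hg ▸ hq.meshConst_add_meshHom _ j g⟩
  have mem : ∀ (d : Equiv.Perm Q) (hd : d ∈ Dis op),
      Additive.ofMul ((⟨d, hd⟩ : Dis op) : Dis op ⧸ stabilizer (Dis op) j.out)
        ∈ AddSubgroup.closure S := by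
    intro d hd
    induction hd using hq.Dis_induction with
    | disp a b =>
      have h : hq.disp a b = hq.disp a j.out / hq.disp b j.out := by
        rw [eq_div_iff_mul_eq', disp_mul_disp]
      show Additive.ofMul (hq.disp a b : Dis op ⧸ stabilizer (Dis op) j.out) ∈ _
      rw [h, QuotientGroup.mk_div, ofMul_div]
      exact sub_mem (AddSubgroup.subset_closure (gen_mem a))
        (AddSubgroup.subset_closure (gen_mem b))
    | one => exact zero_mem _
    | mul d e _ _ hd he => exact add_mem hd he
    | inv d _ hd => exact neg_mem hd
  rw [eq_top_iff]
  intro x _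
  induction x using OrbitGroup.induction_on with | h g => exact mem g g.2

theorem orbitGroupEquiv_op (x y : Q) :
    orbitGroupEquiv op (op x y) = hq.mesh.sum (orbitGroupEquiv op x) (orbitGroupEquiv op y) := by
  suffices h : ∀ p q, op ((orbitGroupEquiv op).symm p) ((orbitGroupEquiv op).symm q)
      = (orbitGroupEquiv op).symm (hq.mesh.sum p q) by
    simpa using congrArg (orbitGroupEquiv op) (h (orbitGroupEquiv op x) (orbitGroupEquiv op y))
  rintro ⟨i, a⟩ ⟨j, b⟩
  induction a using OrbitGroup.induction_on with | h g => ?_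
  induction b using OrbitGroup.induction_on with | h h => ?_
  rw [show hq.mesh.sum _ _ = ⟨j, hq.meshConst i j + hq.meshHom i j (Additive.ofMul (g : _ ⧸ _))
      + (Additive.ofMul (h : _ ⧸ _) - hq.meshHom j j (Additive.ofMul (h : _ ⧸ _)))⟩ from rfl,
    meshConst_add_meshHom, meshHom_ofMul, ← ofMul_div, ← ofMul_mul, ← QuotientGroup.mk_div,
    ← QuotientGroup.mk_mul, orbitGroupEquiv_symm_apply, orbitGroupEquiv_symm_apply,
    orbitGroupEquiv_symm_apply, mul_smul, div_dispHom_smul, disp_smul_op]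

end

end IsQuandle

namespace AffineMesh

variable {I : Type*} {A : I → Type*} [∀ i, AddCommGroup (A i)] (M : AffineMesh I A)

theorem φ_φ_apply (i j j' k : I) (a : A i) : M.φ j k (M.φ i j a) = M.φ j' k (M.φ i j' a) :=
  DFunLike.congr_fun (M.m3 i j j' k) a

theorem φ_c (i j k : I) : M.φ j k (M.c i j) = M.φ k k (M.c i k) - M.φ k k (M.c j k) := by
  rw [M.m4, map_sub]

@[simp]
theorem sum_mk {i j : I} (a : A i) (b : A j) :
    M.sum ⟨i, a⟩ ⟨j, b⟩ = ⟨j, M.c i j + M.φ i j a + (b - M.φ j j b)⟩ := rfl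

theorem sum_self (p : Σ i, A i) : M.sum p p = p := by
  obtain ⟨i, a⟩ := p
  rw [sum_mk, M.m2, zero_add, add_sub_cancel]

theorem sum_self_distrib (p q r : Σ i, A i) :
    M.sum p (M.sum q r) = M.sum (M.sum p q) (M.sum p r) := by
  obtain ⟨i, a⟩ := p
  obtain ⟨j, b⟩ := q
  obtain ⟨k, c⟩ := r
  simp only [sum_mk, Sigma.mk.injEq, heq_eq_eq, true_and, map_add, map_sub,
    M.φ_φ_apply j k j k, M.φ_φ_apply i k j k, M.φ_c i j k]
  abel

theorem sum_medial (p q r s : Σ i, A i) :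
    M.sum (M.sum p q) (M.sum r s) = M.sum (M.sum p r) (M.sum q s) := by
  obtain ⟨i, a⟩ := p
  obtain ⟨j, b⟩ := q
  obtain ⟨k, c⟩ := r
  obtain ⟨l, d⟩ := s
  simp only [sum_mk, Sigma.mk.injEq, heq_eq_eq, true_and, map_add, map_sub,
    M.φ_φ_apply j l j l, M.φ_φ_apply k l k l, M.φ_φ_apply i j k l, M.φ_c i j l, M.φ_c i k l]
  abel

theorem existsUnique_sum_eq (p q : Σ i, A i) : ∃! r, M.sum p r = q := by
  obtain ⟨i, a⟩ := p
  obtain ⟨k, b⟩ := q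
  let E := Equiv.ofBijective _ (M.m1 k)
  refine ⟨⟨k, E.symm (b - M.c i k - M.φ i k a)⟩, ?_, ?_⟩
  · refine congrArg (Sigma.mk k) ?_
    rw [show ∀ x, x - M.φ k k x = E x from fun _ => rfl, E.apply_symm_apply]
    abel
  · rintro ⟨k', c⟩ h
    obtain rfl : k' = k := congrArg Sigma.fst h
    refine congrArg (Sigma.mk k') (E.eq_symm_apply.2 ?_)
    rw [← sigma_mk_injective h]
    show c - M.φ k' k' c = _
    abel

theorem isQuandle_sum : IsQuandle M.sum := ⟨M.sum_self, M.sum_self_distrib, M.existsUnique_sum_eq⟩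

theorem isMedial_sum : IsMedial M.sum := M.sum_medial

end AffineMesh

section Transport

variable {Q R : Type*} {op : Q → Q → Q} {op' : R → R → R} (e : Q ≃ R)
  (he : ∀ x y, e (op x y) = op' (e x) (e y))
include he

theorem IsQuandle.of_equiv (h : IsQuandle op') : IsQuandle op := by
  refine ⟨fun x => e.injective (by rw [he, h.1]),
    fun x y z => e.injective (by simp only [he]; exact h.2.1 _ _ _), fun x y => ?_⟩
  obtain ⟨u, hu, huniq⟩ := h.2.2 (e x) (e y)
  exact ⟨e.symm u, e.injective (by rw [he, e.apply_symm_apply, hu]),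
    fun v hv => e.eq_symm_apply.2 (huniq _ ((he x v).symm.trans (congrArg e hv)))⟩

theorem IsMedial.of_equiv (h : IsMedial op') : IsMedial op :=
  fun x y u v => e.injective (by simp only [he]; exact h _ _ _ _)

end Transport

/-- Theorem 3.14: a binary algebra is a medial quandle if and only if it is isomorphic
to the sum of an indecomposable affine mesh; the mesh can be chosen so that the fibres
correspond exactly to the orbits of the quandle. -/
theorem medial_quandle_iff_sum_of_indecomposable_mesh {Q : Type u} [Nonempty Q]
    (op : Q → Q → Q) :
    (IsQuandle op ∧ IsMedial op) ↔
      ∃ (I : Type u) (_ : Nonempty I) (A : I → Type u) (_ : ∀ i, AddCommGroup (A i))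
        (M : AffineMesh I A), M.Indecomposable ∧
        ∃ φ : Q ≃ (Σ i, A i),
          (∀ x y : Q, φ (op x y) = M.sum (φ x) (φ y)) ∧
          (∀ x y : Q, (φ x).1 = (φ y).1 ↔ ∃ f ∈ LMlt op, f x = y) := by
  constructor
  · rintro ⟨hq, hm⟩
    have := hq.isMulCommutative_Dis hm
    exact ⟨orbitRel.Quotient (Dis op) Q, ⟨Quotient.mk _ (Classical.arbitrary Q)⟩,
      OrbitGroup op, inferInstance, hq.mesh, hq.mesh_indecomposable, orbitGroupEquiv op,
      hq.orbitGroupEquiv_op, hq.orbitGroupEquiv_fst_eq_iff⟩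
  · rintro ⟨I, -, A, _, M, -, e, he, -⟩
    exact ⟨.of_equiv e he M.isQuandle_sum, .of_equiv e he M.isMedial_sum⟩
end

section
/- Let Q be a medial quandle whose orbits are all finite. If the greatest common divisor of the orbit sizes is 1, then Q is 3-reductive. -/
/-! Fix `y` and let `R : w ↦ w·y`. By mediality `R` is an endomorphism, so it semiconjugates
each generator `L_a L_b⁻¹` of the displacement group `Dis` to `L_{a·y} L_{b·y}⁻¹`, hence every
element of `Dis` to an element of `Dis`. The orbits are the `Dis`-orbits, so on each orbit `Qe`
all fibres of `R` are translates of each other and `|R(Qe)|` divides `|Qe|`. Since `Dis` is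
abelian, `R(Qe)` is a translate of `R(Qy)` (as `e·y ∈ Qy`), so `N = |R(Qy)|` divides every orbit
size and `N = 1`. As `y = y·y ∈ R(Qy)` and `x·y ∈ Qy`, this gives `(x·y)·y = y`. -/

open Function MulAction Equiv
open scoped Finset

theorem exists_semiconj_of_mem_closure {α β : Type*} {S : Set (Perm α)} {f : α → β}
    {H : Subgroup (Perm β)} (hS : ∀ g ∈ S, ∃ σ ∈ H, Semiconj f g σ) {g : Perm α}
    (hg : g ∈ Subgroup.closure S) : ∃ σ ∈ H, Semiconj f g σ := by
  induction hg using Subgroup.closure_induction with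
  | mem g hg => exact hS g hg
  | one => exact ⟨1, H.one_mem, fun _ => rfl⟩
  | mul g g' _ _ ih ih' =>
    obtain ⟨σ, hσ, h⟩ := ih
    obtain ⟨σ', hσ', h'⟩ := ih'
    exact ⟨σ * σ', H.mul_mem hσ hσ', h.comp_right h'⟩
  | inv g _ ih =>
    obtain ⟨σ, hσ, h⟩ := ih
    exact ⟨σ⁻¹, H.inv_mem hσ, h.inverses_right g.apply_symm_apply σ.symm_apply_apply⟩

theorem Finset.card_image_dvd_card_of_card_fiber_eq {α β : Type*} [DecidableEq β] {s : Finset α}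
    {f : α → β} {m : ℕ} (h : ∀ b ∈ s.image f, #{x ∈ s | f x = b} = m) : #(s.image f) ∣ #s :=
  ⟨m, by rw [card_eq_sum_card_image f s, sum_congr rfl h, sum_const, smul_eq_mul]⟩

theorem ncard_image_orbit_dvd {G α β : Type*} [Group G] [MulAction G α] {f : α → β}
    (hG : ∀ g : G, ∃ σ : Perm β, Semiconj f (g • ·) σ) (a : α) :
    (f '' orbit G a).ncard ∣ (orbit G a).ncard := by
  classical
  obtain hfin | hinf := (orbit G a).finite_or_infinite
  swap
  · rw [hinf.ncard]
    exact dvd_zero _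
  obtain ⟨s, hs⟩ := hfin.exists_finset_coe
  rw [← hs, ← Finset.coe_image, Set.ncard_coe_finset, Set.ncard_coe_finset]
  refine Finset.card_image_dvd_card_of_card_fiber_eq (m := #{x ∈ s | f x = f a}) fun b hb => ?_
  obtain ⟨_, hx, rfl⟩ := Finset.mem_image.mp hb
  obtain ⟨g, rfl⟩ := mem_orbit_iff.mp (hs ▸ Finset.mem_coe.mpr hx)
  obtain ⟨σ, hσ⟩ := hG g
  have hmem (z : α) : g • z ∈ s ↔ z ∈ s := by
    rw [← Finset.mem_coe, ← Finset.mem_coe, hs, ← orbit_eq_iff, ← orbit_eq_iff, orbit_smul]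
  -- the fibre over `f (g • a)` is the `g`-translate of the fibre over `f a`
  refine Finset.card_nbij' (g⁻¹ • ·) (g • ·) ?_ ?_ (fun z _ => by simp) (fun z _ => by simp)
  · intro z hz
    simp only [Finset.coe_filter, Set.mem_ofPred_eq] at hz ⊢
    refine ⟨(hmem _).mp (by simpa using hz.1), σ.injective ?_⟩
    rw [← hσ, ← hσ]
    simpa using hz.2
  · intro z hz
    simp only [Finset.coe_filter, Set.mem_ofPred_eq] at hz ⊢
    exact ⟨(hmem z).mpr hz.1, by rw [hσ, hσ, hz.2]⟩

open scoped IsMulCommutative in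
theorem ncard_image_orbit_eq_of_eq_smul {G α : Type*} [Group G] [IsMulCommutative G]
    [MulAction G α] {f : α → α} (hG : ∀ g : G, ∃ σ : G, Semiconj f (g • ·) (σ • ·)) {a b : α}
    (h : G) (hab : f b = h • f a) : (f '' orbit G b).ncard = (f '' orbit G a).ncard := by
  have key : ∀ g : G, f (g • b) = h • f (g • a) := fun g => by
    obtain ⟨σ, hσ⟩ := hG g
    rw [show f (g • b) = σ • f b from hσ b, show f (g • a) = σ • f a from hσ a, hab, smul_smul,
      smul_smul, mul_comm]
  have himage : f '' orbit G b = (h • ·) '' (f '' orbit G a) := by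
    simp only [orbit, ← Set.range_comp]
    exact congrArg Set.range (funext key)
  rw [himage, Set.ncard_image_of_injective _ (MulAction.injective h)]

theorem dis_le_lMlt {Q : Type*} (op : Q → Q → Q) : Dis op ≤ LMlt op := by
  refine (Subgroup.closure_le _).mpr ?_
  rintro _ ⟨g, hg, h, hh, rfl⟩
  exact mul_mem (Subgroup.subset_closure hg) (inv_mem (Subgroup.subset_closure hh))

namespace IsQuandle

variable {Q : Type*} {op : Q → Q → Q}

theorem bijective_op (hQ : IsQuandle op) (a : Q) : Bijective (op a) :=
  ⟨fun u v huv => by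
    obtain ⟨w, -, hw⟩ := hQ.2.2 a (op a v)
    rw [hw u huv, hw v rfl],
   fun z => (hQ.2.2 a z).exists⟩

noncomputable def leftPerm (hQ : IsQuandle op) (a : Q) : Perm Q :=
  Equiv.ofBijective (op a) (hQ.bijective_op a)

theorem translations_eq_range (hQ : IsQuandle op) : translations op = Set.range hQ.leftPerm := by
  ext f
  exact ⟨fun ⟨a, ha⟩ => ⟨a, Equiv.ext fun x => (ha x).symm⟩, fun ⟨a, ha⟩ => ⟨a, fun x => ha ▸ rfl⟩⟩

theorem lMlt_eq_closure (hQ : IsQuandle op) :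
    LMlt op = Subgroup.closure (Set.range hQ.leftPerm) := by
  rw [LMlt, hQ.translations_eq_range]

theorem dis_eq_closure (hQ : IsQuandle op) :
    Dis op =
      Subgroup.closure (Set.range fun p : Q × Q => hQ.leftPerm p.1 * (hQ.leftPerm p.2)⁻¹) := by
  rw [Dis, hQ.translations_eq_range]
  congr 1
  ext f
  simp [eq_comm]

theorem leftPerm_mul_inv_mem_dis (hQ : IsQuandle op) (a b : Q) :
    hQ.leftPerm a * (hQ.leftPerm b)⁻¹ ∈ Dis op := by
  rw [hQ.dis_eq_closure]
  exact Subgroup.subset_closure ⟨(a, b), rfl⟩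

theorem mem_orbit_dis_of_mem_lMlt (hQ : IsQuandle op) {g : Perm Q} (hg : g ∈ LMlt op) (w : Q) :
    g w ∈ orbit (Dis op) w := by
  rw [hQ.lMlt_eq_closure] at hg
  induction hg using Subgroup.closure_induction generalizing w with
  | mem g hg =>
    obtain ⟨a, rfl⟩ := hg
    have hw : (hQ.leftPerm w)⁻¹ w = w := Perm.inv_eq_iff_eq.mpr (hQ.1 w).symm
    exact ⟨⟨_, hQ.leftPerm_mul_inv_mem_dis a w⟩, congrArg (hQ.leftPerm a) hw⟩
  | one => exact mem_orbit_self w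
  | mul g g' _ _ ih ih' => exact orbit_eq_iff.mpr (ih' w) ▸ ih (g' w)
  | inv g _ ih => exact mem_orbit_symm.mp (by simpa using ih (g⁻¹ w))

theorem qOrbit_eq_orbit_dis (hQ : IsQuandle op) (e : Q) : qOrbit op e = orbit (Dis op) e := by
  ext w
  constructor
  · rintro ⟨g, hg, rfl⟩
    exact hQ.mem_orbit_dis_of_mem_lMlt hg e
  · rintro ⟨g, rfl⟩
    exact ⟨g, dis_le_lMlt op g.2, rfl⟩

theorem leftPerm_mem_lMlt (hQ : IsQuandle op) (a : Q) : hQ.leftPerm a ∈ LMlt op :=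
  hQ.lMlt_eq_closure ▸ Subgroup.subset_closure ⟨a, rfl⟩

theorem op_mem_qOrbit (hQ : IsQuandle op) (x y : Q) : op x y ∈ qOrbit op y :=
  ⟨hQ.leftPerm x, hQ.leftPerm_mem_lMlt x, rfl⟩

theorem leftPerm_mul_leftPerm (hQ : IsQuandle op) (x y : Q) :
    hQ.leftPerm x * hQ.leftPerm y = hQ.leftPerm (op x y) * hQ.leftPerm x :=
  Equiv.ext fun w => hQ.2.1 x y w

theorem leftPerm_op_mul_leftPerm (hQ : IsQuandle op) (hM : IsMedial op) (x y u : Q) :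
    hQ.leftPerm (op x y) * hQ.leftPerm u = hQ.leftPerm (op x u) * hQ.leftPerm y :=
  Equiv.ext fun w => hM x y u w

theorem commute_leftPerm_mul_inv (hQ : IsQuandle op) (hM : IsMedial op) (e a c : Q) :
    Commute (hQ.leftPerm a * (hQ.leftPerm e)⁻¹) (hQ.leftPerm c * (hQ.leftPerm e)⁻¹) := by
  have ha := hQ.leftPerm_mul_leftPerm e a
  have hc := hQ.leftPerm_mul_leftPerm e c
  have hm := hQ.leftPerm_op_mul_leftPerm hM e a c
  set L := hQ.leftPerm
  calc L a * (L e)⁻¹ * (L c * (L e)⁻¹)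
      = (L e)⁻¹ * (L e * L a) * (L e)⁻¹ * L c * (L e)⁻¹ := by group
    _ = (L e)⁻¹ * (L (op e a) * L c) * (L e)⁻¹ := by rw [ha]; group
    _ = (L e)⁻¹ * (L (op e c) * L e) * (L e)⁻¹ * L a * (L e)⁻¹ := by rw [hm]; group
    _ = L c * (L e)⁻¹ * (L a * (L e)⁻¹) := by rw [← hc]; group

theorem isMulCommutative_dis (hQ : IsQuandle op) (hM : IsMedial op) :
    IsMulCommutative (Dis op) := by
  rw [hQ.dis_eq_closure]
  refine Subgroup.isMulCommutative_closure ?_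
  rintro _ ⟨⟨a, b⟩, rfl⟩ _ ⟨⟨c, d⟩, rfl⟩
  dsimp only
  set L := hQ.leftPerm
  have hab : L a * (L b)⁻¹ = (L b * (L a)⁻¹)⁻¹ := by group
  have hcd : L c * (L d)⁻¹ = L c * (L a)⁻¹ * (L d * (L a)⁻¹)⁻¹ := by group
  rw [hab, hcd]
  have := hQ.commute_leftPerm_mul_inv hM a
  exact ((this b c).mul_right (this b d).inv_right).inv_left.eq

theorem semiconj_op_right (hQ : IsQuandle op) (hM : IsMedial op) (y a : Q) :
    Semiconj (op · y) (op a) (op (op a y)) := fun w => by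
  simpa only [hQ.1 y] using hM a w y y

theorem exists_semiconj_op_right (hQ : IsQuandle op) (hM : IsMedial op) (y : Q) {g : Perm Q}
    (hg : g ∈ Dis op) : ∃ σ ∈ Dis op, Semiconj (op · y) g σ := by
  rw [hQ.dis_eq_closure] at hg
  refine exists_semiconj_of_mem_closure ?_ hg
  rintro _ ⟨⟨a, b⟩, rfl⟩
  refine ⟨_, hQ.leftPerm_mul_inv_mem_dis (op a y) (op b y), ?_⟩
  exact (hQ.semiconj_op_right hM y a).comp_right
    ((hQ.semiconj_op_right hM y b).inverses_right (hQ.leftPerm b).apply_symm_apply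
      (hQ.leftPerm (op b y)).symm_apply_apply)

end IsQuandle

theorem two_reductive_of_coprime_orbit_sizes {Q : Type*} {op : Q → Q → Q} (hQ : IsQuandle op)
    (hM : IsMedial op) (hgcd : ∀ d : ℕ, (∀ e : Q, d ∣ (qOrbit op e).ncard) → d = 1) (x y : Q) :
    op (op x y) y = y := by
  have := hQ.isMulCommutative_dis hM
  have hsemi (g : Dis op) : ∃ σ : Dis op, Semiconj (op · y) (g • ·) (σ • ·) := by
    obtain ⟨σ, hσ, h⟩ := hQ.exists_semiconj_op_right hM y g.2
    exact ⟨⟨σ, hσ⟩, h⟩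
  have hsize (e : Q) : ((op · y) '' qOrbit op e).ncard = ((op · y) '' qOrbit op y).ncard := by
    obtain ⟨h, hh⟩ : op e y ∈ orbit (Dis op) y := hQ.qOrbit_eq_orbit_dis y ▸ hQ.op_mem_qOrbit e y
    rw [hQ.qOrbit_eq_orbit_dis, hQ.qOrbit_eq_orbit_dis]
    exact ncard_image_orbit_eq_of_eq_smul hsemi h (by simp only [hQ.1 y, hh])
  have hdvd (e : Q) : ((op · y) '' qOrbit op y).ncard ∣ (qOrbit op e).ncard := by
    rw [← hsize e, hQ.qOrbit_eq_orbit_dis]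
    exact ncard_image_orbit_dvd (fun g => (hsemi g).elim fun σ h => ⟨σ, h⟩) e
  obtain ⟨z, hz⟩ := Set.ncard_eq_one.mp (hgcd _ hdvd)
  have hy : y ∈ (op · y) '' qOrbit op y := ⟨y, ⟨1, one_mem _, rfl⟩, hQ.1 y⟩
  have hxy : op (op x y) y ∈ (op · y) '' qOrbit op y := ⟨op x y, hQ.op_mem_qOrbit x y, rfl⟩
  rw [hz] at hy hxy
  exact hxy.trans hy.symm

theorem three_reductive_of_coprime_orbit_sizes_general {Q : Type*} (op : Q → Q → Q)
    (hQ : IsQuandle op) (hM : IsMedial op)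
    (hgcd : ∀ d : ℕ, (∀ e : Q, d ∣ (qOrbit op e).ncard) → d = 1) :
    ∀ x y : Q, op (op (op x y) y) y = y := by
  intro x y
  rw [two_reductive_of_coprime_orbit_sizes hQ hM hgcd x y, hQ.1 y]

/-- Corollary 6.3: a medial quandle with finite orbits whose orbit sizes have greatest
common divisor 1 is 3-reductive. -/
theorem three_reductive_of_coprime_orbit_sizes {Q : Type*} (op : Q → Q → Q)
    (hQ : IsQuandle op) (hM : IsMedial op)
    (hfin : ∀ e : Q, (qOrbit op e).Finite)
    (hgcd : ∀ d : ℕ, (∀ e : Q, d ∣ (qOrbit op e).ncard) → d = 1) :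
    ∀ x y : Q, op (op (op x y) y) y = y :=
  three_reductive_of_coprime_orbit_sizes_general op hQ hM hgcd
end
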